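/- Fix reals δ > 0, b > 0, c > 0 and define the Hopfield–Ninio kinetic-regime error fraction ξ(η) = (1 + e^{−δ} η b + e^{−2δ} η c) / (1 + η b + η c) for η > 0. Then: (i) e^{−2δ} < ξ(η) < 1 for every η > 0; (ii) ξ is strictly decreasing on (0, ∞); and (iii) lim_{η→∞} ξ(η) = (e^{−δ} b + e^{−2δ} c)/(b + c), which in turn tends to e^{−2δ} as c/b → ∞. -/

import Mathlib

/-!
With `p = e^{−δ} b + e^{−2δ} c` and `q = b + c`, the error fraction is the Möbius function
`ξ(η) = (1 + p η) / (1 + q η)` of the drive. Since `0 < e^{−δ} < 1`, we have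
`e^{−2δ} q ≤ p < q`, and every claim is then a property of such a ratio: it decreases strictly
from `1` at `η = 0` towards `p / q`, which stays above `e^{−2δ}`.
-/

open Filter Topology

noncomputable def kineticError (δ b c η : ℝ) : ℝ :=
  (1 + Real.exp (-δ) * η * b + Real.exp (-(2 * δ)) * η * c) / (1 + η * b + η * c)

noncomputable def affineRatio (p q x : ℝ) : ℝ :=
  (1 + p * x) / (1 + q * x)

section affineRatio

variable {p q r : ℝ}

theorem affineRatio_lt_one (hq : 0 ≤ q) (hpq : p < q) {x : ℝ} (hx : 0 < x) :
    affineRatio p q x < 1 := by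
  rw [affineRatio, div_lt_one (by positivity)]
  nlinarith

theorem lt_affineRatio (hq : 0 ≤ q) (hr : r < 1) (hrp : r * q ≤ p) {x : ℝ} (hx : 0 < x) :
    r < affineRatio p q x := by
  rw [affineRatio, lt_div_iff₀ (by positivity)]
  nlinarith [mul_le_mul_of_nonneg_right hrp hx.le]

theorem strictAntiOn_affineRatio (hq : 0 ≤ q) (hpq : p < q) :
    StrictAntiOn (affineRatio p q) (Set.Ici 0) := by
  intro x hx y hy hxy
  rw [Set.mem_Ici] at hx hy
  rw [affineRatio, affineRatio, div_lt_div_iff₀ (by positivity) (by positivity)]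
  -- the cross difference is `(q - p) (y - x)`
  nlinarith [mul_pos (sub_pos.mpr hpq) (sub_pos.mpr hxy)]

end affineRatio

theorem tendsto_affine_div_affine_atTop (a b p : ℝ) {q : ℝ} (hq : q ≠ 0) :
    Tendsto (fun x : ℝ => (a + p * x) / (b + q * x)) atTop (𝓝 (p / q)) := by
  have hlim : Tendsto (fun x : ℝ => (a * x⁻¹ + p) / (b * x⁻¹ + q)) atTop
      (𝓝 ((a * 0 + p) / (b * 0 + q))) :=
    ((tendsto_inv_atTop_zero.const_mul a).add_const p).div
      ((tendsto_inv_atTop_zero.const_mul b).add_const q) (by simpa using hq)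
  rw [mul_zero, mul_zero, zero_add, zero_add] at hlim
  refine hlim.congr' ?_
  filter_upwards [eventually_gt_atTop 0] with x hx
  rw [← mul_div_mul_right _ _ hx.ne']
  congr 1 <;> field_simp

theorem kineticError_eq_affineRatio (δ b c : ℝ) :
    kineticError δ b c =
      affineRatio (Real.exp (-δ) * b + Real.exp (-(2 * δ)) * c) (b + c) := by
  funext η
  rw [kineticError, affineRatio]
  ring_nf

/-- For `δ > 0`, `b > 0`, `c > 0`: (i) `e^{−2δ} < ξ(η) < 1` for every `η > 0`;
(ii) `ξ` is strictly decreasing on `(0, ∞)`; (iii) `ξ(η) → (e^{−δ} b + e^{−2δ} c)/(b + c)`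
as `η → ∞`, and this limit tends to `e^{−2δ}` as `c → ∞` (i.e. as `c/b → ∞`). -/
theorem kineticError_properties (δ b c : ℝ) (hδ : 0 < δ) (hb : 0 < b) (hc : 0 < c) :
    (∀ η : ℝ, 0 < η →
        Real.exp (-(2 * δ)) < kineticError δ b c η ∧ kineticError δ b c η < 1)
    ∧ StrictAntiOn (kineticError δ b c) (Set.Ioi 0)
    ∧ Tendsto (kineticError δ b c) atTop
        (𝓝 ((Real.exp (-δ) * b + Real.exp (-(2 * δ)) * c) / (b + c)))
    ∧ Tendsto (fun c' : ℝ => (Real.exp (-δ) * b + Real.exp (-(2 * δ)) * c') / (b + c'))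
        atTop (𝓝 (Real.exp (-(2 * δ)))) := by
  have hsq : Real.exp (-(2 * δ)) = Real.exp (-δ) ^ 2 := by
    rw [← Real.exp_nat_mul]; ring_nf
  set A := Real.exp (-δ)
  have hA : 0 < A := Real.exp_pos _
  have hA1 : A < 1 := Real.exp_lt_one_iff.mpr (neg_neg_of_pos hδ)
  have hA2 : A ^ 2 < A := by nlinarith
  have hq : 0 < b + c := add_pos hb hc
  have hpq : A * b + A ^ 2 * c < b + c :=
    add_lt_add (mul_lt_of_lt_one_left hb hA1) (mul_lt_of_lt_one_left hc (hA2.trans hA1))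
  have hrp : A ^ 2 * (b + c) ≤ A * b + A ^ 2 * c := by
    nlinarith [mul_le_mul_of_nonneg_right hA2.le hb.le]
  rw [kineticError_eq_affineRatio, hsq]
  refine ⟨fun η hη => ⟨lt_affineRatio hq.le (hA2.trans hA1) hrp hη, affineRatio_lt_one hq.le hpq hη⟩,
    (strictAntiOn_affineRatio hq.le hpq).mono Set.Ioi_subset_Ici_self,
    tendsto_affine_div_affine_atTop 1 1 _ hq.ne', ?_⟩
  simpa using tendsto_affine_div_affine_atTop (A * b) b (A ^ 2) one_ne_zero
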